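/- Let α, β > 0, γ ≠ 0 and a > 0, and let F(λ) = (1 + (aλ)^α + λ^{2β})^γ, a differentiable strictly monotone bijection from (0, ∞) onto (1, ∞) if γ > 0 and onto (0, 1) if γ < 0. Let g be its inverse function. Then g is differentiable and for every μ in its domain, writing λ = g(μ) and M = μ^{1/γ} (so M > 1), one has λ·M / (|γ| · max(α, 2β) · μ · (M − 1)) ≤ |g′(μ)| ≤ λ·M / (|γ| · min(α, 2β) · μ · (M − 1)). In particular, as μ^{1/γ} → ∞ one has |g′(μ)| ∼ μ^{−1} λ, and as μ^{1/γ} → 1 one has |g′(μ)| ∼ |1−μ|^{−1} λ, with constants depending only on α, β, γ. -/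

import Mathlib

/-!
Write `F = u ^ γ` with `u(λ) = 1 + (aλ)^α + λ^(2β)`. Then `λ F'(λ) = γ F(λ) · λu'(λ) / u(λ)`,
and the Euler derivative `λu'(λ) = α (aλ)^α + 2β λ^(2β)` lies between `min(α, 2β) (u − 1)` and
`max(α, 2β) (u − 1)`. Since `g` is a left inverse of `F` on the open set `(0, ∞)`, the inverse
function theorem gives `g'(μ) = 1 / F'(λ) = λ u / (γ μ · λu'(λ))`, and `u(λ) = μ^(1/γ)`.
-/

open Set Filter Topology

section MinMaxCombination

variable {R : Type*} [Ring R] [LinearOrder R] [IsStrictOrderedRing R] {p q x y : R}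

theorem min_mul_add_le_mul_add_mul (hx : 0 ≤ x) (hy : 0 ≤ y) :
    min p q * (x + y) ≤ p * x + q * y := by
  have hp := mul_le_mul_of_nonneg_right (min_le_left p q) hx
  have hq := mul_le_mul_of_nonneg_right (min_le_right p q) hy
  rw [mul_add]
  exact add_le_add hp hq

theorem mul_add_mul_le_max_mul_add (hx : 0 ≤ x) (hy : 0 ≤ y) :
    p * x + q * y ≤ max p q * (x + y) := by
  have hp := mul_le_mul_of_nonneg_right (le_max_left p q) hx
  have hq := mul_le_mul_of_nonneg_right (le_max_right p q) hy
  rw [mul_add]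
  exact add_le_add hp hq

end MinMaxCombination

/-- The paper's `1 + ((2k + n)λ)^α + λ^(2β)`, with `a = 2k + n`. -/
noncomputable def inhomogeneousSymbol (a α β l : ℝ) : ℝ :=
  1 + (a * l) ^ α + l ^ (2 * β)

noncomputable def inhomogeneousSymbolEuler (a α β l : ℝ) : ℝ :=
  α * (a * l) ^ α + 2 * β * l ^ (2 * β)

section InhomogeneousSymbol

variable {a α β l : ℝ}

theorem one_lt_inhomogeneousSymbol (ha : 0 < a) (hl : 0 < l) : 1 < inhomogeneousSymbol a α β l := by
  have := Real.rpow_pos_of_pos (mul_pos ha hl) α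
  have := Real.rpow_pos_of_pos hl (2 * β)
  unfold inhomogeneousSymbol
  linarith

theorem inhomogeneousSymbolEuler_pos (ha : 0 < a) (hα : 0 < α) (hβ : 0 < β) (hl : 0 < l) :
    0 < inhomogeneousSymbolEuler a α β l := by
  have := Real.rpow_pos_of_pos (mul_pos ha hl) α
  have := Real.rpow_pos_of_pos hl (2 * β)
  unfold inhomogeneousSymbolEuler
  positivity

theorem min_mul_inhomogeneousSymbol_sub_one_le_euler (ha : 0 < a) (hl : 0 < l) :
    min α (2 * β) * (inhomogeneousSymbol a α β l - 1) ≤ inhomogeneousSymbolEuler a α β l := by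
  have h := min_mul_add_le_mul_add_mul (p := α) (q := 2 * β)
    (Real.rpow_nonneg (mul_pos ha hl).le α) (Real.rpow_nonneg hl.le (2 * β))
  unfold inhomogeneousSymbol inhomogeneousSymbolEuler
  linear_combination h

theorem inhomogeneousSymbolEuler_le_max_mul_sub_one (ha : 0 < a) (hl : 0 < l) :
    inhomogeneousSymbolEuler a α β l ≤ max α (2 * β) * (inhomogeneousSymbol a α β l - 1) := by
  have h := mul_add_mul_le_max_mul_add (p := α) (q := 2 * β)
    (Real.rpow_nonneg (mul_pos ha hl).le α) (Real.rpow_nonneg hl.le (2 * β))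
  unfold inhomogeneousSymbol inhomogeneousSymbolEuler
  linear_combination h

theorem hasStrictDerivAt_inhomogeneousSymbol (ha : 0 < a) (hl : 0 < l) :
    HasStrictDerivAt (inhomogeneousSymbol a α β) (inhomogeneousSymbolEuler a α β l / l) l := by
  have hal : a * l ≠ 0 := (mul_pos ha hl).ne'
  have h₁ := (Real.hasStrictDerivAt_rpow_const_of_ne hal α).comp l
    ((hasStrictDerivAt_id l).const_mul a)
  have h₂ := Real.hasStrictDerivAt_rpow_const_of_ne hl.ne' (2 * β)
  refine ((h₁.const_add 1).add h₂).congr_deriv ?_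
  rw [Real.rpow_sub (mul_pos ha hl), Real.rpow_sub hl, Real.rpow_one, Real.rpow_one]
  unfold inhomogeneousSymbolEuler
  field_simp

theorem hasStrictDerivAt_inhomogeneousSymbol_rpow (ha : 0 < a) (hl : 0 < l) (γ : ℝ) :
    HasStrictDerivAt (fun x => inhomogeneousSymbol a α β x ^ γ)
      (γ * inhomogeneousSymbol a α β l ^ γ * inhomogeneousSymbolEuler a α β l /
        (inhomogeneousSymbol a α β l * l)) l := by
  have hu := (one_lt_inhomogeneousSymbol (α := α) (β := β) ha hl).trans' zero_lt_one
  refine ((Real.hasStrictDerivAt_rpow_const_of_ne hu.ne' γ).comp l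
    (hasStrictDerivAt_inhomogeneousSymbol ha hl)).congr_deriv ?_
  rw [Real.rpow_sub hu, Real.rpow_one]
  field_simp

end InhomogeneousSymbol

theorem inverse_inhomogeneous_spectral_parameter_derivative_bound (α β γ a : ℝ)
    (hα : 0 < α) (hβ : 0 < β) (hγ : γ ≠ 0) (ha : 0 < a)
    (g : ℝ → ℝ)
    (hg : ∀ μ ∈ (if 0 < γ then Ioi (1 : ℝ) else Ioo (0 : ℝ) 1),
      0 < g μ ∧ (1 + (a * g μ) ^ α + (g μ) ^ (2 * β)) ^ γ = μ)
    (hginv : ∀ l ∈ Ioi (0 : ℝ), g ((1 + (a * l) ^ α + l ^ (2 * β)) ^ γ) = l) :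
    ∀ μ ∈ (if 0 < γ then Ioi (1 : ℝ) else Ioo (0 : ℝ) 1),
      DifferentiableAt ℝ g μ ∧
      g μ * μ ^ (1 / γ) / (|γ| * max α (2 * β) * μ * (μ ^ (1 / γ) - 1)) ≤ |deriv g μ| ∧
      |deriv g μ| ≤ g μ * μ ^ (1 / γ) / (|γ| * min α (2 * β) * μ * (μ ^ (1 / γ) - 1)) := by
  intro μ hμ
  obtain ⟨hl, hFl⟩ : 0 < g μ ∧ inhomogeneousSymbol a α β (g μ) ^ γ = μ := hg μ hμ
  set u := inhomogeneousSymbol a α β (g μ)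
  set S := inhomogeneousSymbolEuler a α β (g μ)
  have hu : 1 < u := one_lt_inhomogeneousSymbol ha hl
  have hS : 0 < S := inhomogeneousSymbolEuler_pos ha hα hβ hl
  have hμ₀ : 0 < μ := hFl ▸ Real.rpow_pos_of_pos (by linarith) γ
  have hγ₀ : 0 < |γ| := abs_pos.2 hγ
  have hM : μ ^ (1 / γ) = u := by
    rw [← hFl, ← Real.rpow_mul (by linarith), mul_one_div_cancel hγ, Real.rpow_one]
  have hder : HasStrictDerivAt g (γ * μ * S / (u * g μ))⁻¹ μ := by
    -- `g` is a left inverse of `F` on a neighbourhood of `g μ`; no continuity of `g` is needed.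
    have := (hasStrictDerivAt_inhomogeneousSymbol_rpow ha hl γ).to_local_left_inverse
      (by positivity) (eventually_of_mem (Ioi_mem_nhds hl) fun x hx => hginv x hx)
    rwa [hFl] at this
  have habs : |deriv g μ| = g μ * u / (|γ| * μ * S) := by
    rw [hder.hasDerivAt.deriv, inv_div, abs_div, abs_of_pos (mul_pos (by linarith) hl),
      abs_mul, abs_mul, abs_of_pos hμ₀, abs_of_pos hS, mul_comm u]
  refine ⟨hder.hasDerivAt.differentiableAt, ?_, ?_⟩ <;> rw [habs, hM]
  · apply div_le_div_of_nonneg_left (by positivity) (by positivity)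
    have := inhomogeneousSymbolEuler_le_max_mul_sub_one (α := α) (β := β) ha hl
    calc |γ| * μ * S ≤ |γ| * μ * (max α (2 * β) * (u - 1)) := by gcongr
      _ = |γ| * max α (2 * β) * μ * (u - 1) := by ring
  · have hmin : 0 < min α (2 * β) := lt_min hα (by linarith)
    apply div_le_div_of_nonneg_left (by positivity)
      (mul_pos (mul_pos (mul_pos hγ₀ hmin) hμ₀) (by linarith))
    have := min_mul_inhomogeneousSymbol_sub_one_le_euler (α := α) (β := β) ha hl
    calc |γ| * min α (2 * β) * μ * (u - 1) = |γ| * μ * (min α (2 * β) * (u - 1)) := by ring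
      _ ≤ |γ| * μ * S := by gcongr
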